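/- arXiv:1410.3615 — 2 statements merged into one kernel-verified Lean document; each statement's English description precedes it below -/
import Mathlib

section
/- A real A ∈ 2^ω belongs to KT(Δ⁰₂) if and only if A ∈ KT(f) for every finite-to-one approximable function f : ℕ → ℕ; likewise A belongs to LK(Δ⁰₂) if and only if A ∈ LK(f) for every function f : 2^{<ω} → ℕ of the form f(σ) = g(|σ|) with g finite-to-one approximable. -/
/-! Common framework: prefix-free Kolmogorov complexity via a universal
prefix-free oracle machine, Δ⁰₂ functions and orders, Turing and wtt
reducibility, Ω, and the uniform measure on Cantor space. -/

/-- Finite binary strings, `2^{<ω}`. -/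
abbrev BinStr := List Bool

/-- Reals, i.e. infinite binary sequences `2^ω`. -/
abbrev Seq2 := ℕ → Bool

/-- The initial segment `A↾n` of a real `A ∈ 2^ω`. -/
def restrict (A : Seq2) (n : ℕ) : BinStr := (List.range n).map A

/-- A prefix-free oracle machine, presented as a computable enumeration of
axioms `(τ, p, y)`, meaning: on any oracle extending `τ`, the machine halts on
program `p` with output `y`.  Consistency says that for compatible oracle
strings the halting programs form a prefix-free set and outputs are unique. -/
structure PrefixOracleMachine where
  axioms : ℕ → Option (BinStr × BinStr × BinStr)
  axioms_computable : Computable axioms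
  consistent : ∀ s t τ₁ p₁ y₁ τ₂ p₂ y₂,
    axioms s = some (τ₁, p₁, y₁) → axioms t = some (τ₂, p₂, y₂) →
    (τ₁ <+: τ₂ ∨ τ₂ <+: τ₁) → p₁ <+: p₂ → p₁ = p₂ ∧ y₁ = y₂

/-- `M.Computes A p y` : with oracle `A`, machine `M` halts on program `p` with
output `y`. -/
def PrefixOracleMachine.Computes (M : PrefixOracleMachine) (A : Seq2) (p y : BinStr) : Prop :=
  ∃ s τ, M.axioms s = some (τ, p, y) ∧ ∃ n, τ = restrict A n

/-- A universal prefix-free oracle machine: it describes every string (relative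
to every oracle), and it simulates every prefix-free oracle machine up to an
additive constant in the length of programs. -/
structure UniversalPrefixMachine extends PrefixOracleMachine where
  total : ∀ (A : Seq2) (y : BinStr), ∃ p, toPrefixOracleMachine.Computes A p y
  universal : ∀ M : PrefixOracleMachine, ∃ c : ℕ, ∀ (A : Seq2) (p y : BinStr),
    M.Computes A p y →
      ∃ q, toPrefixOracleMachine.Computes A q y ∧ q.length ≤ p.length + c

/-- `K^A(y)` : prefix-free Kolmogorov complexity of `y` relative to oracle `A`. -/
noncomputable def KOr (U : UniversalPrefixMachine) (A : Seq2) (y : BinStr) : ℕ :=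
  sInf {n | ∃ p : BinStr, p.length = n ∧ U.toPrefixOracleMachine.Computes A p y}

/-- The all-zeros (recursive) oracle. -/
def zeroSeq : Seq2 := fun _ => false

/-- `K(y)` : (unrelativized) prefix-free Kolmogorov complexity. -/
noncomputable def Kc (U : UniversalPrefixMachine) (y : BinStr) : ℕ := KOr U zeroSeq y

/-- `K(n)` : the complexity of the string of `n` zeros. -/
noncomputable def KcNat (U : UniversalPrefixMachine) (n : ℕ) : ℕ :=
  Kc U (List.replicate n false)

/-- `A ∈ KT(g)` : `A` is K-trivial up to `g`. -/
def KT (U : UniversalPrefixMachine) (g : ℕ → ℕ) (A : Seq2) : Prop :=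
  ∃ c : ℕ, ∀ n : ℕ, Kc U (restrict A n) ≤ KcNat U n + g n + c

/-- `A ∈ LK(f)` : `A` is low for K up to `f`. -/
def LK (U : UniversalPrefixMachine) (f : BinStr → ℕ) (A : Seq2) : Prop :=
  ∃ c : ℕ, ∀ σ : BinStr, Kc U σ ≤ KOr U A σ + f σ + c

/-- The position of a string in the length-lexicographic ordering of `2^{<ω}`. -/
def strNum (σ : BinStr) : ℕ := σ.foldl (fun n b => 2 * n + (if b then 2 else 1)) 0

/-- A function `ℕ → ℕ` is Δ⁰₂ iff it has a recursive approximation. -/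
def Delta02Fun (g : ℕ → ℕ) : Prop :=
  ∃ G : ℕ → ℕ → ℕ, Computable₂ G ∧ ∀ x, ∃ t, ∀ s ≥ t, G s x = g x

/-- A function `2^{<ω} → ℕ` is Δ⁰₂ iff it has a recursive approximation. -/
def Delta02StrFun (f : BinStr → ℕ) : Prop :=
  ∃ F : ℕ → BinStr → ℕ, Computable₂ F ∧ ∀ σ, ∃ t, ∀ s ≥ t, F s σ = f σ

/-- A real is Δ⁰₂ iff it has a recursive approximation. -/
def Delta02Seq (A : Seq2) : Prop :=
  ∃ F : ℕ → ℕ → Bool, Computable₂ F ∧ ∀ x, ∃ t, ∀ s ≥ t, F s x = A x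

/-- An order: an unbounded nondecreasing function `ℕ → ℕ`. -/
def IsOrder (g : ℕ → ℕ) : Prop := Monotone g ∧ ∀ b : ℕ, ∃ m, b < g m

/-- An order on strings: unbounded and nondecreasing with respect to the
length-lexicographic ordering of `2^{<ω}`. -/
def IsStrOrder (f : BinStr → ℕ) : Prop :=
  (∀ σ τ : BinStr, strNum σ ≤ strNum τ → f σ ≤ f τ) ∧ ∀ b : ℕ, ∃ σ, b < f σ

/-- `A ∈ KT(Δ⁰₂)` : `A` is K-trivial up to every Δ⁰₂ order. -/
def KTDelta (U : UniversalPrefixMachine) (A : Seq2) : Prop :=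
  ∀ g : ℕ → ℕ, Delta02Fun g → IsOrder g → KT U g A

/-- `A ∈ LK(Δ⁰₂)` : `A` is low for K up to every Δ⁰₂ order. -/
def LKDelta (U : UniversalPrefixMachine) (A : Seq2) : Prop :=
  ∀ f : BinStr → ℕ, Delta02StrFun f → IsStrOrder f → LK U f A

/-- A Δ⁰₂ function is finite-to-one approximable if it has a recursive
approximation `F` such that for every `n`, for all but finitely many `m`,
`F s m > n` for all stages `s`. -/
def FinToOneApprox (f : ℕ → ℕ) : Prop :=
  ∃ F : ℕ → ℕ → ℕ, Computable₂ F ∧ (∀ x, ∃ t, ∀ s ≥ t, F s x = f x) ∧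
    ∀ n : ℕ, {m : ℕ | ∃ s, F s m ≤ n}.Finite

/-- A Turing functional, presented as a computable enumeration of axioms
`(τ, n, b)`, meaning: on any oracle extending `τ`, the output bit `n` is `b`. -/
structure TuringFunctional where
  axioms : ℕ → Option (BinStr × ℕ × Bool)
  axioms_computable : Computable axioms
  consistent : ∀ s t τ₁ n₁ b₁ τ₂ n₂ b₂,
    axioms s = some (τ₁, n₁, b₁) → axioms t = some (τ₂, n₂, b₂) →
    (τ₁ <+: τ₂ ∨ τ₂ <+: τ₁) → n₁ = n₂ → b₁ = b₂

/-- `Φ.Computes B A` : `Φ^B = A`. -/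
def TuringFunctional.Computes (Φ : TuringFunctional) (B A : Seq2) : Prop :=
  ∀ n : ℕ, ∃ s k, Φ.axioms s = some (restrict B k, n, A n)

/-- Turing reducibility `A ≤_T B`. -/
def TuringLE (A B : Seq2) : Prop := ∃ Φ : TuringFunctional, Φ.Computes B A

/-- Weak truth-table reducibility `A ≤_wtt B` : a Turing reduction whose use is
bounded by a recursive function. -/
def WttLE (A B : Seq2) : Prop :=
  ∃ (Φ : TuringFunctional) (u : ℕ → ℕ), Computable u ∧
    ∀ n : ℕ, ∃ s k, k ≤ u n ∧ Φ.axioms s = some (restrict B k, n, A n)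

/-- The effective join `A ⊕ B`. -/
def join (A B : Seq2) : Seq2 := fun n => if n % 2 = 0 then A (n / 2) else B (n / 2)

/-- `A` is Martin-Löf random: `K(A↾n) ≥ n - c` for all `n`. -/
def MLRandom (U : UniversalPrefixMachine) (A : Seq2) : Prop :=
  ∃ c : ℕ, ∀ n : ℕ, n ≤ Kc U (restrict A n) + c

/-- `A` is infinitely often K-trivial. -/
def InfOftenKTrivial (U : UniversalPrefixMachine) (A : Seq2) : Prop :=
  ∃ c : ℕ, {n : ℕ | Kc U (restrict A n) ≤ KcNat U n + c}.Infinite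

/-- K-reducibility `B ≤_K A`. -/
def KLE (U : UniversalPrefixMachine) (B A : Seq2) : Prop :=
  ∃ c : ℕ, ∀ n : ℕ, Kc U (restrict B n) ≤ Kc U (restrict A n) + c

/-- LK-reducibility `A ≤_LK B`. -/
def LKLE (U : UniversalPrefixMachine) (A B : Seq2) : Prop :=
  ∃ c : ℕ, ∀ σ : BinStr, KOr U B σ ≤ KOr U A σ + c

/-- `A` is weakly low for K: `K(σ) ≤ K^A(σ) + c` for infinitely many strings σ. -/
def WeaklyLowForK (U : UniversalPrefixMachine) (A : Seq2) : Prop :=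
  ∃ c : ℕ, {σ : BinStr | Kc U σ ≤ KOr U A σ + c}.Infinite

/-- Chaitin's Ω : the measure of the domain of the universal machine. -/
noncomputable def Omega (U : UniversalPrefixMachine) : ℝ :=
  ∑' p : {p : BinStr // ∃ y, U.toPrefixOracleMachine.Computes zeroSeq p y},
    ((2 : ℝ) ^ (p : BinStr).length)⁻¹

/-- The `n`-th binary digit of a real number `x`. -/
noncomputable def realBit (x : ℝ) (n : ℕ) : Bool :=
  decide (⌊x * 2 ^ (n + 1)⌋ % 2 = 1)

/-- `Ω↾n` : the length-`n` initial segment of the binary expansion of Ω. -/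
noncomputable def omegaStr (U : UniversalPrefixMachine) (n : ℕ) : BinStr :=
  (List.range n).map (realBit (Omega U))

/-- `A` is low for Ω. -/
def LowForOmega (U : UniversalPrefixMachine) (A : Seq2) : Prop :=
  ∀ c : ℕ, ∃ n : ℕ, KOr U A (omegaStr U n) + c < n

/-- The uniform (coin-flipping) measure on `2^ω`, obtained as the image of
Lebesgue measure on `[0,1]` under the binary-expansion map. -/
noncomputable def cantorMeasure : MeasureTheory.Measure Seq2 :=
  MeasureTheory.Measure.map (fun x : ℝ => fun n : ℕ => realBit x n)
    (MeasureTheory.volume.restrict (Set.Icc (0 : ℝ) 1))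

/-! Every Δ⁰₂ order `g` is finite-to-one approximable: at stage `s`, approximate `g m` by
the maximum over `y ≤ m` of the stage-`max s m` approximations of `g y`; since `g` is unbounded
and the stage is at least `m`, this is large for all large `m` at every stage. Conversely, a
finite-to-one approximable `f` dominates the Δ⁰₂ order `m ↦ min_{y ≥ m} f y`, and being
K-trivial or low for K up to a bound passes to larger bounds. On strings, an order `g` on `ℕ`
yields the string order `σ ↦ g |σ|`, and a string order `f` dominates `σ ↦ f (0^|σ|)`, because
`0^n` comes first among the strings of length `n`. -/

section StrNum

lemma strNum_append_singleton (σ : BinStr) (b : Bool) :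
    strNum (σ ++ [b]) = 2 * strNum σ + if b then 2 else 1 := by
  simp [strNum, List.foldl_append]

lemma two_pow_length_le_strNum_succ (σ : BinStr) : 2 ^ σ.length ≤ strNum σ + 1 := by
  induction σ using List.reverseRecOn with
  | nil => simp [strNum]
  | append_singleton σ b ih =>
    rw [strNum_append_singleton, List.length_append, List.length_singleton, pow_succ]
    cases b <;> simp only [Bool.false_eq_true, ↓reduceIte] <;> omega

lemma strNum_succ_lt_two_pow (σ : BinStr) : strNum σ + 1 < 2 ^ (σ.length + 1) := by
  induction σ using List.reverseRecOn with
  | nil => simp [strNum]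
  | append_singleton σ b ih =>
    rw [strNum_append_singleton, List.length_append, List.length_singleton, pow_succ]
    cases b <;> simp only [Bool.false_eq_true, ↓reduceIte] <;> omega

lemma strNum_replicate_false (m : ℕ) : strNum (List.replicate m false) + 1 = 2 ^ m := by
  induction m with
  | zero => simp [strNum]
  | succ m ih =>
    rw [List.replicate_succ', strNum_append_singleton, pow_succ]
    simp only [Bool.false_eq_true, ↓reduceIte]
    omega

lemma length_le_of_strNum_le {σ τ : BinStr} (h : strNum σ ≤ strNum τ) :
    σ.length ≤ τ.length := by
  have : 2 ^ σ.length < 2 ^ (τ.length + 1) :=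
    (two_pow_length_le_strNum_succ σ).trans_lt
      ((Nat.succ_le_succ h).trans_lt (strNum_succ_lt_two_pow τ))
  exact Nat.lt_succ_iff.1 ((Nat.pow_lt_pow_iff_right (by norm_num)).1 this)

lemma strNum_replicate_length_le (σ : BinStr) :
    strNum (List.replicate σ.length false) ≤ strNum σ := by
  have := strNum_replicate_false σ.length
  have := two_pow_length_le_strNum_succ σ
  omega

lemma strNum_le_strNum_replicate_length_succ (σ : BinStr) :
    strNum σ ≤ strNum (List.replicate (σ.length + 1) false) := by
  have := strNum_replicate_false (σ.length + 1)
  have := strNum_succ_lt_two_pow σ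
  omega

end StrNum

section RunningExtrema

def prefixMax (h : ℕ → ℕ) (k : ℕ) : ℕ :=
  Nat.rec (h 0) (fun i acc => max acc (h (i + 1))) k

def prefixMin (h : ℕ → ℕ) (k : ℕ) : ℕ :=
  Nat.rec (h 0) (fun i acc => min acc (h (i + 1))) k

variable {α : Type*} [Primcodable α]

lemma computable₂_prefixMax {G : α → ℕ → ℕ} (hG : Computable₂ G) :
    Computable₂ fun a k => prefixMax (G a) k :=
  (Computable.nat_rec Computable.snd (hG.comp Computable.fst (Computable.const 0))
    (Primrec.nat_max.to_comp.comp (Computable.snd.comp Computable.snd)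
      (hG.comp (Computable.fst.comp Computable.fst)
        (Computable.succ.comp (Computable.fst.comp Computable.snd)))).to₂).to₂

lemma computable₂_prefixMin {G : α → ℕ → ℕ} (hG : Computable₂ G) :
    Computable₂ fun a k => prefixMin (G a) k :=
  (Computable.nat_rec Computable.snd (hG.comp Computable.fst (Computable.const 0))
    (Primrec.nat_min.to_comp.comp (Computable.snd.comp Computable.snd)
      (hG.comp (Computable.fst.comp Computable.fst)
        (Computable.succ.comp (Computable.fst.comp Computable.snd)))).to₂).to₂

lemma le_prefixMax (h : ℕ → ℕ) {i k : ℕ} (hik : i ≤ k) : h i ≤ prefixMax h k := by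
  induction k with
  | zero => rw [Nat.le_zero.1 hik]; rfl
  | succ k ih =>
    rcases Nat.lt_succ_iff_lt_or_eq.1 (Nat.lt_succ_of_le hik) with hik | rfl
    · exact (ih (Nat.lt_succ_iff.1 hik)).trans (le_max_left _ _)
    · exact le_max_right _ _

lemma prefixMax_congr {h h' : ℕ → ℕ} {k : ℕ} (hh : ∀ i ≤ k, h i = h' i) :
    prefixMax h k = prefixMax h' k := by
  induction k with
  | zero => exact hh 0 le_rfl
  | succ k ih =>
    exact congrArg₂ max (ih fun i hi => hh i (hi.trans k.le_succ)) (hh (k + 1) le_rfl)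

lemma prefixMax_of_monotone {h : ℕ → ℕ} (hh : Monotone h) (k : ℕ) :
    prefixMax h k = h k := by
  induction k with
  | zero => rfl
  | succ k ih => exact (congrArg (max · _) ih).trans (max_eq_right (hh k.le_succ))

lemma prefixMin_le (h : ℕ → ℕ) {i k : ℕ} (hik : i ≤ k) : prefixMin h k ≤ h i := by
  induction k with
  | zero => rw [Nat.le_zero.1 hik]; rfl
  | succ k ih =>
    rcases Nat.lt_succ_iff_lt_or_eq.1 (Nat.lt_succ_of_le hik) with hik | rfl
    · exact (min_le_left _ _).trans (ih (Nat.lt_succ_iff.1 hik))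
    · exact min_le_right _ _

lemma le_prefixMin {h : ℕ → ℕ} {v k : ℕ} (hv : ∀ i ≤ k, v ≤ h i) :
    v ≤ prefixMin h k := by
  induction k with
  | zero => exact hv 0 le_rfl
  | succ k ih => exact le_min (ih fun i hi => hv i (hi.trans k.le_succ)) (hv (k + 1) le_rfl)

end RunningExtrema

section TailInf

noncomputable def tailInf (f : ℕ → ℕ) (m : ℕ) : ℕ := sInf (f '' Set.Ici m)

lemma tailInf_le (f : ℕ → ℕ) {m y : ℕ} (h : m ≤ y) : tailInf f m ≤ f y :=
  Nat.sInf_le ⟨y, h, rfl⟩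

lemma exists_apply_eq_tailInf (f : ℕ → ℕ) (m : ℕ) : ∃ y, m ≤ y ∧ f y = tailInf f m :=
  Nat.sInf_mem (Set.nonempty_Ici.image f)

lemma monotone_tailInf (f : ℕ → ℕ) : Monotone (tailInf f) := by
  intro m m' hm
  obtain ⟨y, hy, hfy⟩ := exists_apply_eq_tailInf f m'
  exact hfy ▸ tailInf_le f (hm.trans hy)

lemma exists_lt_tailInf {f : ℕ → ℕ} (hf : ∀ n, {m | f m ≤ n}.Finite) (b : ℕ) :
    ∃ m, b < tailInf f m := by
  obtain ⟨N, hN⟩ := (hf b).bddAbove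
  obtain ⟨y, hy, hfy⟩ := exists_apply_eq_tailInf f (N + 1)
  refine ⟨N + 1, hfy ▸ not_le.1 fun hle => ?_⟩
  exact absurd (hN hle) (by omega)

end TailInf

section FinToOneApprox

variable {f g : ℕ → ℕ}

lemma FinToOneApprox.finite_le (hf : FinToOneApprox f) (n : ℕ) : {m | f m ≤ n}.Finite := by
  obtain ⟨F, -, hlim, hfin⟩ := hf
  refine (hfin n).subset fun m hm => ?_
  obtain ⟨t, ht⟩ := hlim m
  exact ⟨t, (ht t le_rfl).trans_le hm⟩

lemma FinToOneApprox.delta02Fun_tailInf (hf : FinToOneApprox f) : Delta02Fun (tailInf f) := by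
  obtain ⟨F, hFc, hlim, hfin⟩ := hf
  choose T hT using hlim
  refine ⟨fun s m => prefixMin (fun i => F s (m + i)) s, ?_, fun m => ?_⟩
  · have hG : Computable₂ fun (a : ℕ × ℕ) i => F a.1 (a.2 + i) :=
      hFc.comp (Computable.fst.comp Computable.fst)
        (Primrec.nat_add.to_comp.comp (Computable.snd.comp Computable.fst) Computable.snd)
    exact ((computable₂_prefixMin hG).comp Computable.id Computable.fst).to₂
  obtain ⟨y, hmy, hfy⟩ := exists_apply_eq_tailInf f m
  -- the finitely many `x` whose approximations ever drop to `tailInf f m` settle by stage `N`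
  obtain ⟨N, hN⟩ := ((hfin (tailInf f m)).image T).bddAbove
  refine ⟨max (y - m) (max (T y) N), fun s hs => le_antisymm ?_ (le_prefixMin fun i _ => ?_)⟩
  · calc prefixMin (fun i => F s (m + i)) s ≤ F s (m + (y - m)) := prefixMin_le _ (by omega)
      _ = f y := by rw [Nat.add_sub_cancel' hmy, hT y s (by omega)]
      _ = tailInf f m := hfy
  · by_cases hsettled : ∃ s', F s' (m + i) ≤ tailInf f m
    · rw [hT (m + i) s ((hN ⟨m + i, hsettled, rfl⟩).trans (by omega))]
      exact tailInf_le f (Nat.le_add_right m i)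
    · exact (not_exists.1 hsettled s |> not_le.1).le

lemma FinToOneApprox.exists_isOrder_le (hf : FinToOneApprox f) :
    ∃ g, Delta02Fun g ∧ IsOrder g ∧ ∀ m, g m ≤ f m :=
  ⟨tailInf f, hf.delta02Fun_tailInf, ⟨monotone_tailInf f, exists_lt_tailInf hf.finite_le⟩,
    fun _ => tailInf_le f le_rfl⟩

lemma IsOrder.finToOneApprox (hΔ : Delta02Fun g) (hg : IsOrder g) : FinToOneApprox g := by
  obtain ⟨G, hGc, hlim⟩ := hΔ
  choose T hT using hlim
  refine ⟨fun s m => prefixMax (G (max s m)) m, ?_, fun m => ?_, fun n => ?_⟩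
  · have hG : Computable₂ fun (a : ℕ × ℕ) y => G (max a.1 a.2) y :=
      hGc.comp (Primrec.nat_max.to_comp.comp (Computable.fst.comp Computable.fst)
        (Computable.snd.comp Computable.fst)) Computable.snd
    exact ((computable₂_prefixMax hG).comp Computable.id Computable.snd).to₂
  · obtain ⟨N, hN⟩ := ((Set.finite_Iic m).image T).bddAbove
    refine ⟨N, fun s hs => ?_⟩
    show prefixMax (G (max s m)) m = g m
    rw [prefixMax_congr fun y hy =>
        hT y _ ((hN ⟨y, hy, rfl⟩).trans (hs.trans (le_max_left _ _))),
      prefixMax_of_monotone hg.1]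
  · obtain ⟨y, hy⟩ := hg.2 n
    refine (Set.finite_Iio (max y (T y))).subset
      fun m ⟨s, (hs : prefixMax (G (max s m)) m ≤ n)⟩ => ?_
    by_contra hm
    simp only [Set.mem_Iio, not_lt, max_le_iff] at hm
    have := le_prefixMax (G (max s m)) hm.1
    rw [hT y _ (hm.2.trans (le_max_right _ _))] at this
    omega

end FinToOneApprox

section Transfer

lemma KT.mono {U : UniversalPrefixMachine} {A : Seq2} {g f : ℕ → ℕ} (h : KT U g A)
    (hgf : ∀ n, g n ≤ f n) : KT U f A :=
  let ⟨c, hc⟩ := h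
  ⟨c, fun n => (hc n).trans (by have := hgf n; omega)⟩

lemma LK.mono {U : UniversalPrefixMachine} {A : Seq2} {g f : BinStr → ℕ} (h : LK U g A)
    (hgf : ∀ σ, g σ ≤ f σ) : LK U f A :=
  let ⟨c, hc⟩ := h
  ⟨c, fun σ => (hc σ).trans (by have := hgf σ; omega)⟩

lemma Delta02Fun.comp_length {g : ℕ → ℕ} (hg : Delta02Fun g) :
    Delta02StrFun fun σ => g σ.length :=
  let ⟨G, hGc, hlim⟩ := hg
  ⟨fun s σ => G s σ.length,
    hGc.comp Computable.fst (Primrec.list_length.to_comp.comp Computable.snd),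
    fun σ => hlim σ.length⟩

lemma IsOrder.comp_length {g : ℕ → ℕ} (hg : IsOrder g) : IsStrOrder fun σ => g σ.length :=
  ⟨fun _ _ h => hg.1 (length_le_of_strNum_le h), fun b =>
    let ⟨m, hm⟩ := hg.2 b
    ⟨List.replicate m false, by simpa using hm⟩⟩

lemma computable_replicate_false : Computable fun m => List.replicate m false :=
  (Primrec.list_map Primrec.list_range (Primrec.const false).to₂).to_comp.of_eq fun m => by simp

lemma Delta02StrFun.comp_replicate {f : BinStr → ℕ} (hf : Delta02StrFun f) :
    Delta02Fun fun m => f (List.replicate m false) :=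
  let ⟨F, hFc, hlim⟩ := hf
  ⟨fun s m => F s (List.replicate m false),
    hFc.comp Computable.fst (computable_replicate_false.comp Computable.snd),
    fun m => hlim (List.replicate m false)⟩

lemma IsStrOrder.comp_replicate {f : BinStr → ℕ} (hf : IsStrOrder f) :
    IsOrder fun m => f (List.replicate m false) := by
  refine ⟨fun m m' hm => hf.1 _ _ ?_, fun b => ?_⟩
  · have := strNum_replicate_false m
    have := strNum_replicate_false m'
    have : 2 ^ m ≤ 2 ^ m' := Nat.pow_le_pow_right two_pos hm
    omega
  · obtain ⟨σ, hσ⟩ := hf.2 b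
    exact ⟨σ.length + 1, hσ.trans_le (hf.1 _ _ (strNum_le_strNum_replicate_length_succ σ))⟩

lemma IsStrOrder.apply_replicate_length_le {f : BinStr → ℕ} (hf : IsStrOrder f) (σ : BinStr) :
    f (List.replicate σ.length false) ≤ f σ :=
  hf.1 _ _ (strNum_replicate_length_le σ)

end Transfer

/-- KT(Δ⁰₂) (resp. LK(Δ⁰₂)) coincides with being K-trivial (resp. low for K)
up to every finite-to-one approximable function. -/
theorem stmt4 (U : UniversalPrefixMachine) (A : Seq2) :
    (KTDelta U A ↔ ∀ f : ℕ → ℕ, FinToOneApprox f → KT U f A) ∧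
    (LKDelta U A ↔ ∀ g : ℕ → ℕ, FinToOneApprox g → LK U (fun σ => g σ.length) A) := by
  refine ⟨⟨fun h f hf => ?_, fun h g hΔ hg => h g (hg.finToOneApprox hΔ)⟩,
    ⟨fun h g hg => ?_, fun h f hΔ hf => ?_⟩⟩
  · obtain ⟨g, hΔ, hg, hgf⟩ := hf.exists_isOrder_le
    exact (h g hΔ hg).mono hgf
  · obtain ⟨g', hΔ, hg', hg'g⟩ := hg.exists_isOrder_le
    exact (h _ hΔ.comp_length hg'.comp_length).mono fun σ => hg'g σ.length
  · exact (h _ (hf.comp_replicate.finToOneApprox hΔ.comp_replicate)).mono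
      hf.apply_replicate_length_le
end

section
/- If A ≤_wtt B and B ∈ KT(Δ⁰₂), then A ∈ KT(Δ⁰₂). -/
/-!
Let `Φ` compute `A` from `B` with use bounded by a computable `u`, and let `v ≥ u` be
computable and strictly increasing. Then `A↾n` can be recovered effectively from `B↾v(n)`,
so `K(A↾n) ≤ K(B↾v(n)) + O(1)`, while `K(v(n)) ≤ K(n) + O(1)`. For a Δ⁰₂ order `g`,
composing with a computable monotone left inverse `ψ` of `v` gives a Δ⁰₂ order `g ∘ ψ`,
and `B ∈ KT(g ∘ ψ)` yields `K(B↾v(n)) ≤ K(v(n)) + g(n) + O(1)`.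
-/

section Computability

variable {α β σ : Type*} [Primcodable α] [Primcodable β] [Primcodable σ]

theorem Computable.list_map {f : α → List β} {g : α → β → σ} (hf : Computable f)
    (hg : Computable₂ g) : Computable fun a => (f a).map (g a) := by
  let step : α → ℕ × List σ → List σ := fun a p =>
    p.2 ++ Option.casesOn (f a)[p.1]? [] fun b => [g a b]
  have hstep : Computable₂ step :=
    Computable.list_append.comp (Computable.snd.comp Computable.snd)
      (Computable.option_casesOn
        (Computable.list_getElem?.comp (hf.comp Computable.fst)
          (Computable.fst.comp Computable.snd))
        (Computable.const [])
        ((Computable.list_cons.comp (hg.comp (Computable.fst.comp Computable.fst) Computable.snd)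
          (Computable.const [])).to₂))
  have hrec : ∀ a n, (Nat.rec [] (fun k acc => step a (k, acc)) n : List σ) =
      ((f a).take n).map (g a) := by
    intro a n
    induction n with
    | zero => simp
    | succ n ih =>
      simp only [step, ih, List.take_add_one, List.map_append]
      cases (f a)[n]? <;> rfl
  refine (Computable.nat_rec (Computable.list_length.comp hf) (Computable.const []) hstep).of_eq
    fun a => ?_
  rw [hrec, List.take_length]

theorem Computable.nat_findGreatest {f : α → ℕ} {p : α → ℕ → Prop} [DecidableRel p]
    (hf : Computable f) (hp : Computable₂ fun a n => decide (p a n)) :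
    Computable fun a => (f a).findGreatest (p a) :=
  have hstep : Computable₂ fun a (nih : ℕ × ℕ) =>
      if p a (nih.1 + 1) then nih.1 + 1 else nih.2 :=
    (Computable.cond (hp.comp Computable.fst (Computable.succ.comp
      (Computable.fst.comp Computable.snd)))
      (Computable.succ.comp (Computable.fst.comp Computable.snd))
      (Computable.snd.comp Computable.snd)).of_eq fun _ => Bool.cond_decide _ _ _
  (Computable.nat_rec hf (Computable.const 0) hstep).of_eq fun a => by
    induction f a <;> simp [Nat.findGreatest, *]

end Computability

theorem exists_computable_strictMono_ge {u : ℕ → ℕ} (hu : Computable u) :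
    ∃ v : ℕ → ℕ, Computable v ∧ StrictMono v ∧ ∀ n, u n ≤ v n := by
  let v : ℕ → ℕ := fun n => Nat.rec (u 0) (fun k acc => acc + u (k + 1) + 1) n
  have hv : ∀ n, v (n + 1) = v n + u (n + 1) + 1 := fun _ => rfl
  refine ⟨v, ?_, strictMono_nat_of_lt_succ fun n => by rw [hv]; omega, ?_⟩
  · exact Computable.nat_rec Computable.id (Computable.const (u 0))
      (Primrec.nat_add.to_comp.comp
        (Primrec.nat_add.to_comp.comp (Computable.snd.comp Computable.snd)
          (hu.comp (Computable.succ.comp (Computable.fst.comp Computable.snd))))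
        (Computable.const 1)).to₂
  · rintro (_ | n)
    · rfl
    · rw [hv]; omega

theorem exists_computable_monotone_leftInverse {v : ℕ → ℕ} (hv : Computable v)
    (hmono : StrictMono v) :
    ∃ ψ : ℕ → ℕ, Computable ψ ∧ Monotone ψ ∧ ∀ n, ψ (v n) = n := by
  refine ⟨fun m => m.findGreatest (fun k => v k ≤ m), ?_, fun a b hab => ?_, fun n => ?_⟩
  · exact Computable.nat_findGreatest Computable.id
      (Primrec.nat_le.decide.to_comp.comp (hv.comp Computable.snd) Computable.fst)
  · exact (Nat.findGreatest_mono_left (fun _ h => h.trans hab) a).trans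
      (Nat.findGreatest_mono_right _ hab)
  · refine le_antisymm ?_ (Nat.le_findGreatest (hmono.id_le n) le_rfl)
    exact hmono.le_iff_le.mp
      (Nat.findGreatest_spec (P := fun k => v k ≤ v n) (hmono.id_le n) le_rfl)

theorem Delta02Fun.comp {g ψ : ℕ → ℕ} (hg : Delta02Fun g) (hψ : Computable ψ) :
    Delta02Fun (g ∘ ψ) := by
  obtain ⟨G, hG, hlim⟩ := hg
  exact ⟨fun s m => G s (ψ m), hG.comp Computable.fst (hψ.comp Computable.snd),
    fun m => hlim (ψ m)⟩

theorem IsOrder.comp {g ψ : ℕ → ℕ} (hg : IsOrder g) (hψ : Monotone ψ)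
    (hsurj : Function.Surjective ψ) : IsOrder (g ∘ ψ) := by
  refine ⟨hg.1.comp hψ, fun b => ?_⟩
  obtain ⟨n, hn⟩ := hg.2 b
  obtain ⟨m, rfl⟩ := hsurj n
  exact ⟨m, hn⟩

namespace UniversalPrefixMachine

variable (U : UniversalPrefixMachine)

theorem KOr_le_length {X : Seq2} {p y : BinStr} (h : U.Computes X p y) :
    KOr U X y ≤ p.length :=
  Nat.sInf_le ⟨p, rfl, h⟩

theorem exists_length_eq_KOr (X : Seq2) (y : BinStr) :
    ∃ p : BinStr, p.length = KOr U X y ∧ U.Computes X p y := by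
  obtain ⟨p, hp⟩ := U.total X y
  exact Nat.sInf_mem (⟨p.length, p, rfl, hp⟩ :
    {n | ∃ q : BinStr, q.length = n ∧ U.Computes X q y}.Nonempty)

/-- On program `p`, runs `U` to get some `y` and outputs the `z` with `(y, z)` enumerated
by `E`. -/
def postcomp (E : ℕ → Option (BinStr × BinStr)) (hE : Computable E)
    (hfun : ∀ s t y z z', E s = some (y, z) → E t = some (y, z') → z = z') :
    PrefixOracleMachine where
  axioms n := (Encodable.decode (α := ℕ × ℕ) n).bind fun st =>
    (U.axioms st.1).bind fun a => (E st.2).bind fun e =>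
      if a.2.2 = e.1 then some (a.1, a.2.1, e.2) else none
  axioms_computable := by
    have hglue : Primrec₂ fun (a : BinStr × BinStr × BinStr) (e : BinStr × BinStr) =>
        if a.2.2 = e.1 then some (a.1, a.2.1, e.2) else none :=
      Primrec.ite (Primrec.eq.comp (Primrec.snd.comp (Primrec.snd.comp Primrec.fst))
          (Primrec.fst.comp Primrec.snd))
        (Primrec.option_some.comp (Primrec.pair (Primrec.fst.comp Primrec.fst)
          (Primrec.pair (Primrec.fst.comp (Primrec.snd.comp Primrec.fst))
            (Primrec.snd.comp Primrec.snd))))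
        (Primrec.const none)
    have hinner : Computable₂ fun (st : ℕ × ℕ) (a : BinStr × BinStr × BinStr) =>
        (E st.2).bind fun e => if a.2.2 = e.1 then some (a.1, a.2.1, e.2) else none :=
      Computable.option_bind (hE.comp (Computable.snd.comp Computable.fst))
        (hglue.to_comp.comp (Computable.snd.comp Computable.fst) Computable.snd)
    exact Computable.option_bind Computable.decode
      (Computable.option_bind (U.axioms_computable.comp (Computable.fst.comp Computable.snd))
        (hinner.comp (Computable.snd.comp Computable.fst) Computable.snd))
  consistent := by
    intro s t τ₁ p₁ z₁ τ₂ p₂ z₂ h₁ h₂ hτ hp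
    simp only [Option.bind_eq_some_iff, Option.ite_none_right_eq_some, Option.some.injEq,
      Prod.mk.injEq] at h₁ h₂
    obtain ⟨_, _, ⟨_, _, y₁⟩, hU₁, ⟨_, _⟩, hE₁, rfl, rfl, rfl, rfl⟩ := h₁
    obtain ⟨_, _, ⟨_, _, y₂⟩, hU₂, ⟨_, _⟩, hE₂, rfl, rfl, rfl, rfl⟩ := h₂
    obtain ⟨rfl, rfl⟩ := U.consistent _ _ _ _ _ _ _ _ hU₁ hU₂ hτ hp
    exact ⟨rfl, hfun _ _ _ _ _ hE₁ hE₂⟩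

theorem exists_KOr_le_of_graph (E : ℕ → Option (BinStr × BinStr)) (hE : Computable E)
    (hfun : ∀ s t y z z', E s = some (y, z) → E t = some (y, z') → z = z') :
    ∃ c, ∀ X t y z, E t = some (y, z) → KOr U X z ≤ KOr U X y + c := by
  obtain ⟨c, hc⟩ := U.universal (U.postcomp E hE hfun)
  refine ⟨c, fun X t y z hyz => ?_⟩
  obtain ⟨p, hp, s, τ, hs, hτ⟩ := U.exists_length_eq_KOr X y
  have hpz : (U.postcomp E hE hfun).Computes X p z := by
    refine ⟨Encodable.encode (s, t), τ, ?_, hτ⟩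
    simp [postcomp, hs, hyz]
  obtain ⟨q, hq, hqp⟩ := hc X p z hpz
  calc KOr U X z ≤ q.length := U.KOr_le_length hq
    _ ≤ KOr U X y + c := hp ▸ hqp

theorem exists_KOr_map_le {f : BinStr → BinStr} (hf : Computable f) :
    ∃ c, ∀ X y, KOr U X (f y) ≤ KOr U X y + c := by
  let E : ℕ → Option (BinStr × BinStr) := fun t =>
    (Encodable.decode (α := BinStr) t).map fun y => (y, f y)
  have hE : Computable E := Computable.option_map Computable.decode
    (Computable.pair Computable.snd (hf.comp Computable.snd)).to₂
  obtain ⟨c, hc⟩ := U.exists_KOr_le_of_graph E hE (by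
    simp only [E, Option.map_eq_some_iff, Prod.mk.injEq]
    rintro _ _ _ _ _ ⟨_, _, rfl, rfl⟩ ⟨_, _, rfl, rfl⟩
    rfl)
  exact ⟨c, fun X y => hc X (Encodable.encode y) y (f y) (by simp [E])⟩

theorem exists_KcNat_comp_le {ψ : ℕ → ℕ} (hψ : Computable ψ) :
    ∃ c, ∀ n, KcNat U (ψ n) ≤ KcNat U n + c := by
  have hreplicate : Primrec fun n => List.replicate n false :=
    (Primrec.list_map Primrec.list_range (Primrec.const false).to₂).of_eq fun n => by simp
  obtain ⟨c, hc⟩ := U.exists_KOr_map_le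
    (hreplicate.to_comp.comp (hψ.comp Computable.list_length))
  refine ⟨c, fun n => ?_⟩
  have h := hc zeroSeq (List.replicate n false)
  rwa [List.length_replicate] at h

end UniversalPrefixMachine

theorem restrict_prefix_restrict (A : Seq2) {k m : ℕ} (h : k ≤ m) :
    restrict A k <+: restrict A m := by
  rw [List.prefix_iff_eq_take, restrict, restrict, ← List.map_take, List.take_range]
  simp [h]

namespace TuringFunctional

variable (Φ : TuringFunctional)

/-- `W` lists, for each `i < |W|`, an axiom `(σ, i, b)` of `Φ`, enumerated at stage `L[i]`, whose
oracle condition `σ` is a prefix of `y`. -/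
def Certifies (y : BinStr) (L : List ℕ) (W : List (BinStr × ℕ × Bool)) : Prop :=
  L.map Φ.axioms = W.map some ∧ W.map (·.2.1) = List.range W.length ∧ ∀ w ∈ W, w.1 <+: y

instance (y : BinStr) (L : List ℕ) (W : List (BinStr × ℕ × Bool)) :
    Decidable (Φ.Certifies y L W) :=
  inferInstanceAs (Decidable (_ ∧ _ ∧ _))

theorem Certifies.output_eq {Φ : TuringFunctional} {y : BinStr} {L₁ L₂ : List ℕ}
    {W₁ W₂ : List (BinStr × ℕ × Bool)} (h₁ : Φ.Certifies y L₁ W₁) (h₂ : Φ.Certifies y L₂ W₂)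
    (hlen : W₁.length = W₂.length) : W₁.map (·.2.2) = W₂.map (·.2.2) := by
  have entry : ∀ {L W}, Φ.Certifies y L W → ∀ i (hi : i < W.length),
      (∃ s, Φ.axioms s = some W[i]) ∧ W[i].2.1 = i ∧ W[i].1 <+: y := by
    rintro L W ⟨hax, hidx, hpre⟩ i hi
    obtain ⟨s, -, hs⟩ :=
      List.mem_map.mp (hax ▸ List.mem_map_of_mem (f := some) (W.getElem_mem hi))
    refine ⟨⟨s, hs⟩, ?_, hpre _ (W.getElem_mem hi)⟩
    simpa [hi] using congrArg (·[i]?) hidx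
  refine List.ext_getElem (by simp [hlen]) fun i hi₁ hi₂ => ?_
  simp only [List.length_map] at hi₁ hi₂
  obtain ⟨⟨s₁, hs₁⟩, hi₁', hpre₁⟩ := entry h₁ i hi₁
  obtain ⟨⟨s₂, hs₂⟩, hi₂', hpre₂⟩ := entry h₂ i hi₂
  simpa using Φ.consistent _ _ _ _ _ _ _ _ hs₁ hs₂
    (List.prefix_or_prefix_of_prefix hpre₁ hpre₂) (hi₁'.trans hi₂'.symm)

/-- Enumerates the pairs `(y, z)` such that `Φ^Y↾|z| = z` is certified for every oracle `Y`
extending `y`. Requiring `|y| = v |z|` with `v` injective makes `y` determine `z`. -/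
def certifiedPairs (v : ℕ → ℕ) (t : ℕ) : Option (BinStr × BinStr) :=
  (Encodable.decode (α := BinStr × List ℕ × List (BinStr × ℕ × Bool)) t).bind fun x =>
    if x.1.length = v x.2.2.length ∧ Φ.Certifies x.1 x.2.1 x.2.2 then
      some (x.1, x.2.2.map (·.2.2))
    else none

theorem computable_certifiedPairs {v : ℕ → ℕ} (hv : Computable v) :
    Computable (Φ.certifiedPairs v) := by
  let Cert := BinStr × List ℕ × List (BinStr × ℕ × Bool)
  have hprefix : PrimrecRel fun (σ y : BinStr) => σ <+: y :=
    (Primrec.eq.comp Primrec.fst (Primrec.list_take.comp (Primrec.list_length.comp Primrec.fst)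
      Primrec.snd)).of_eq fun _ => List.prefix_iff_eq_take.symm
  have hpart : PrimrecPred fun x : Cert =>
      x.2.2.map (·.2.1) = List.range x.2.2.length ∧ ∀ w ∈ x.2.2, w.1 <+: x.1 :=
    have hW : Primrec fun x : Cert => x.2.2 := Primrec.snd.comp Primrec.snd
    (Primrec.eq.comp
      (Primrec.list_map hW (Primrec.fst.comp (Primrec.snd.comp Primrec.snd)).to₂)
      (Primrec.list_range.comp (Primrec.list_length.comp hW))).and
    ((PrimrecRel.forall_mem_list
      (hprefix.comp₂ (Primrec.fst.comp₂ Primrec₂.left) Primrec₂.right)).comp hW Primrec.fst)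
  have hcond : Computable fun x : Cert =>
      decide (x.1.length = v x.2.2.length ∧ Φ.Certifies x.1 x.2.1 x.2.2) := by
    have hlen : Computable fun x : Cert => decide (x.1.length = v x.2.2.length) :=
      Primrec.eq.decide.to_comp.comp (Computable.list_length.comp Computable.fst)
        (hv.comp (Computable.list_length.comp (Computable.snd.comp Computable.snd)))
    have hax : Computable fun x : Cert => decide (x.2.1.map Φ.axioms = x.2.2.map some) :=
      Primrec.eq.decide.to_comp.comp
        (Computable.list_map (Computable.fst.comp Computable.snd)
          (Φ.axioms_computable.comp Computable.snd).to₂)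
        (Primrec.list_map (Primrec.snd.comp Primrec.snd) (Primrec.option_some.comp
          Primrec.snd).to₂).to_comp
    refine (Primrec.and.to_comp.comp hlen (Primrec.and.to_comp.comp hax
      hpart.decide.to_comp)).of_eq fun x => ?_
    rw [Bool.eq_iff_iff]
    simp only [Bool.and_eq_true, decide_eq_true_eq]
    rfl
  refine Computable.option_bind Computable.decode
    ((Computable.cond (hcond.comp Computable.snd)
      (Computable.option_some.comp (Computable.pair (Computable.fst.comp Computable.snd)
        ((Primrec.list_map Primrec.id
          (Primrec.snd.comp (Primrec.snd.comp Primrec.snd)).to₂).to_comp.comp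
          (Computable.snd.comp (Computable.snd.comp Computable.snd)))))
      (Computable.const none)).of_eq fun _ => Bool.cond_decide _ _ _).to₂

theorem certifiedPairs_functional {v : ℕ → ℕ} (hv : Function.Injective v) {s t : ℕ}
    {y z z' : BinStr} (hs : Φ.certifiedPairs v s = some (y, z))
    (ht : Φ.certifiedPairs v t = some (y, z')) : z = z' := by
  simp only [certifiedPairs, Option.bind_eq_some_iff, Option.ite_none_right_eq_some,
    Option.some.injEq, Prod.mk.injEq] at hs ht
  obtain ⟨⟨_, _, W⟩, -, ⟨hlen, hW⟩, rfl, rfl⟩ := hs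
  obtain ⟨⟨_, _, W'⟩, -, ⟨hlen', hW'⟩, rfl, rfl⟩ := ht
  exact hW.output_eq hW' (hv (hlen.symm.trans hlen'))

theorem exists_certifiedPairs_eq_restrict {u v : ℕ → ℕ} {A B : Seq2}
    (huse : ∀ n, ∃ s k, k ≤ u n ∧ Φ.axioms s = some (restrict B k, n, A n))
    (hv : Monotone v) (huv : ∀ n, u n ≤ v n) (n : ℕ) :
    ∃ t, Φ.certifiedPairs v t = some (restrict B (v n), restrict A n) := by
  choose S K hK hS using huse
  let W := (List.range n).map fun i => (restrict B (K i), i, A i)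
  refine ⟨Encodable.encode (restrict B (v n), (List.range n).map S, W), ?_⟩
  have hcert : Φ.Certifies (restrict B (v n)) ((List.range n).map S) W := by
    refine ⟨by simp [W, hS], by simp [W, Function.comp_def], ?_⟩
    simp only [W, List.mem_map, List.mem_range]
    rintro _ ⟨i, hi, rfl⟩
    exact restrict_prefix_restrict B ((hK i).trans ((huv i).trans (hv hi.le)))
  simp only [certifiedPairs, Encodable.encodek, Option.bind_some]
  rw [if_pos ⟨by simp [W, restrict], hcert⟩]
  simp [W, restrict]

end TuringFunctional

theorem WttLE.exists_KOr_restrict_le (U : UniversalPrefixMachine) {A B : Seq2}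
    (h : WttLE A B) : ∃ v : ℕ → ℕ, Computable v ∧ StrictMono v ∧
      ∃ c, ∀ X n, KOr U X (restrict A n) ≤ KOr U X (restrict B (v n)) + c := by
  obtain ⟨Φ, u, hu, huse⟩ := h
  obtain ⟨v, hv, hmono, huv⟩ := exists_computable_strictMono_ge hu
  obtain ⟨c, hc⟩ := U.exists_KOr_le_of_graph (Φ.certifiedPairs v)
    (Φ.computable_certifiedPairs hv)
    fun _ _ _ _ _ => Φ.certifiedPairs_functional hmono.injective
  refine ⟨v, hv, hmono, c, fun X n => ?_⟩
  obtain ⟨t, ht⟩ := Φ.exists_certifiedPairs_eq_restrict huse hmono.monotone huv n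
  exact hc X t _ _ ht

/-- KT(Δ⁰₂) is closed downwards under wtt-reducibility. -/
theorem stmt11 (U : UniversalPrefixMachine) (A B : Seq2)
    (hw : WttLE A B) (hB : KTDelta U B) : KTDelta U A := by
  intro g hg hord
  obtain ⟨v, hv, hmono, cA, hA⟩ := hw.exists_KOr_restrict_le U
  obtain ⟨ψ, hψ, hψmono, hψv⟩ := exists_computable_monotone_leftInverse hv hmono
  obtain ⟨cB, hcB⟩ := hB (g ∘ ψ) (hg.comp hψ) (hord.comp hψmono fun n => ⟨v n, hψv n⟩)
  obtain ⟨cv, hcv⟩ := U.exists_KcNat_comp_le hv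
  refine ⟨cA + cB + cv, fun n => ?_⟩
  have hBn := hcB (v n)
  simp only [Function.comp_apply, hψv] at hBn
  calc Kc U (restrict A n) ≤ Kc U (restrict B (v n)) + cA := hA zeroSeq n
    _ ≤ KcNat U (v n) + g n + cB + cA := by gcongr
    _ ≤ KcNat U n + g n + (cA + cB + cv) := by linarith [hcv n]
end
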